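/- arXiv:2007.02390 — 2 statements merged into one kernel-verified Lean document; each statement's English description precedes it below -/
import Mathlib

section
/- Let P' ∈ 𝒫_{k,ε}(G) be a one-way perturbation of P ∈ 𝒫_{k,ε}(G) in which the vertex set V_ij is moved from district P_i to district P_j, where 0 ≤ ε < 1. Let a, b : V → ℝ satisfy 0 ≤ a(v) ≤ b(v) ≤ p(v) and b(v) > 0 for all v, let f(W) = a(W)/b(W), and let α > 0 satisfy α ≤ b(W)/p(W) for each W ∈ {P_i, P'_i, P_j, P'_j}. Then max over all districts m of |f(P_m) − f(P'_m)| ≤ (2ε/(α(1−ε))) · max( |f(V_ij) − f(P_i)| , |f(V_ij) − f(P_j)| ); in particular |f(P_i) − f(P'_i)| ≤ (2ε/(α(1−ε)))·|f(V_ij) − f(P_i)| and |f(P_j) − f(P'_j)| ≤ (2ε/(α(1−ε)))·|f(V_ij) − f(P_j)|. -/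
open scoped Classical

noncomputable section

/-- A districting plan: a partition of the vertices of `G` into `k` nonempty
connected districts, each with population within `ε` of the ideal size. -/
structure DistrictingPlan (V : Type*) [Fintype V] [DecidableEq V] (G : SimpleGraph V)
    (p : V → ℝ) (k : ℕ) (ε : ℝ) where
  part : Fin k → Finset V
  part_nonempty : ∀ m, (part m).Nonempty
  part_disjoint : ∀ m n, m ≠ n → Disjoint (part m) (part n)
  part_covers : ∀ v : V, ∃ m, v ∈ part m
  part_connected : ∀ m, (G.induce ((part m : Finset V) : Set V)).Connected
  balance_low : ∀ m, (1 - ε) * (∑ v, p v) / (k : ℝ) ≤ ∑ v ∈ part m, p v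
  balance_high : ∀ m, ∑ v ∈ part m, p v ≤ (1 + ε) * (∑ v, p v) / (k : ℝ)

/-- The district dual graph of a districting plan: districts are adjacent iff
some edge of `G` joins them. -/
def dualGraph {V : Type*} [Fintype V] [DecidableEq V] {G : SimpleGraph V} {p : V → ℝ}
    {k : ℕ} {ε : ℝ} (P : DistrictingPlan V G p k ε) : SimpleGraph (Fin k) where
  Adj m n := m ≠ n ∧ ∃ u ∈ P.part m, ∃ v ∈ P.part n, G.Adj u v
  symm := by
    constructor
    rintro m n ⟨hmn, u, hu, v, hv, huv⟩
    exact ⟨hmn.symm, v, hv, u, hu, huv.symm⟩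
  loopless := by
    constructor
    intro m h
    exact h.1 rfl

/-!
Moving a block `S` of vertices into or out of a district changes `f = a/b` like a mediant:
`f(A ∪ S) - f(A) = b(S)/b(A ∪ S) · (f(S) - f(A)) = b(S)/b(A) · (f(S) - f(A ∪ S))`.
In both cases the weight is `b(S)/b(D)` for the district `D` of the new plan, and it is at most
`2ε/(α(1-ε))`: `b(S) ≤ p(S)` is the difference of two district populations, hence at most
`2ε·p(V)/k`, while `b(D) ≥ α·p(D) ≥ α(1-ε)·p(V)/k`.
-/

open Finset

section Algebra

variable {K : Type*} [Field K]

theorem add_div_add_sub_div_eq_mul_sub {x y u w : K} (hy : y ≠ 0) (hw : w ≠ 0) (hyw : y + w ≠ 0) :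
    (x + u) / (y + w) - x / y = w / (y + w) * (u / w - x / y) := by
  field_simp
  ring

theorem add_div_add_sub_div_eq_mul_sub' {x y u w : K} (hy : y ≠ 0) (hw : w ≠ 0) (hyw : y + w ≠ 0) :
    (x + u) / (y + w) - x / y = w / y * (u / w - (x + u) / (y + w)) := by
  field_simp
  ring

variable [LinearOrder K] [IsStrictOrderedRing K]

theorem abs_le_mul_abs_of_eq_mul {x c y k : K} (h : x = c * y) (hc : 0 ≤ c) (hck : c ≤ k) :
    |x| ≤ k * |y| := by
  rw [h, abs_mul, abs_of_nonneg hc]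
  gcongr

theorem div_le_two_mul_div_mul_one_sub {s d t α ε : K} (hs₀ : 0 < s) (hs : s ≤ 2 * ε * t)
    (hd : α * ((1 - ε) * t) ≤ d) (ht : 0 < t) (hα : 0 < α) (hε : ε < 1) :
    s / d ≤ 2 * ε / (α * (1 - ε)) :=
  calc s / d ≤ 2 * ε * t / (α * ((1 - ε) * t)) :=
        div_le_div₀ (hs₀.le.trans hs) hs (mul_pos hα (mul_pos (sub_pos.2 hε) ht)) hd
    _ = 2 * ε / (α * (1 - ε)) := by rw [← mul_assoc, mul_div_mul_right _ _ ht.ne']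

end Algebra

section SumRatio

variable {V : Type*} [DecidableEq V] {a b : V → ℝ} {A S : Finset V}

def sumRatio (a b : V → ℝ) (W : Finset V) : ℝ :=
  (∑ v ∈ W, a v) / ∑ v ∈ W, b v

theorem abs_sumRatio_union_sub_le (hAS : Disjoint A S) (hA : 0 < ∑ v ∈ A, b v)
    (hS : 0 < ∑ v ∈ S, b v) {K : ℝ} (hK : (∑ v ∈ S, b v) / ∑ v ∈ A ∪ S, b v ≤ K) :
    |sumRatio a b (A ∪ S) - sumRatio a b A| ≤ K * |sumRatio a b S - sumRatio a b A| := by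
  rw [sum_union hAS] at hK
  refine abs_le_mul_abs_of_eq_mul ?_ (by positivity) hK
  simp only [sumRatio, sum_union hAS]
  exact add_div_add_sub_div_eq_mul_sub hA.ne' hS.ne' (by positivity)

theorem abs_sumRatio_union_sub_le' (hAS : Disjoint A S) (hA : 0 < ∑ v ∈ A, b v)
    (hS : 0 < ∑ v ∈ S, b v) {K : ℝ} (hK : (∑ v ∈ S, b v) / ∑ v ∈ A, b v ≤ K) :
    |sumRatio a b (A ∪ S) - sumRatio a b A| ≤ K * |sumRatio a b S - sumRatio a b (A ∪ S)| := by
  refine abs_le_mul_abs_of_eq_mul ?_ (by positivity) hK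
  simp only [sumRatio, sum_union hAS]
  exact add_div_add_sub_div_eq_mul_sub' hA.ne' hS.ne' (by positivity)

end SumRatio

namespace DistrictingPlan

variable {V : Type*} [Fintype V] [DecidableEq V] {G : SimpleGraph V} {p : V → ℝ} {k : ℕ} {ε : ℝ}

theorem sum_part_sub_sum_part_le (P Q : DistrictingPlan V G p k ε) (m n : Fin k) :
    ∑ v ∈ P.part m, p v - ∑ v ∈ Q.part n, p v ≤ 2 * ε * ((∑ v, p v) / k) := by
  have hhigh := P.balance_high m
  have hlow := Q.balance_low n
  have : (1 + ε) * (∑ v, p v) / k - (1 - ε) * (∑ v, p v) / k = 2 * ε * ((∑ v, p v) / k) := by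
    ring
  linarith

theorem mul_le_sum_part (Q : DistrictingPlan V G p k ε) (m : Fin k) {b : V → ℝ}
    (hbp : ∀ v, b v ≤ p v) (hb : ∀ v, 0 < b v) {α : ℝ} (hα : 0 ≤ α)
    (hαm : α ≤ (∑ v ∈ Q.part m, b v) / ∑ v ∈ Q.part m, p v) :
    α * ((1 - ε) * (∑ v, p v) / k) ≤ ∑ v ∈ Q.part m, b v := by
  have hb_pos : 0 < ∑ v ∈ Q.part m, b v := sum_pos (fun v _ ↦ hb v) (Q.part_nonempty m)
  have hp_pos : 0 < ∑ v ∈ Q.part m, p v := hb_pos.trans_le (sum_le_sum fun v _ ↦ hbp v)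
  calc α * ((1 - ε) * (∑ v, p v) / k) ≤ α * ∑ v ∈ Q.part m, p v := by
        gcongr
        exact Q.balance_low m
    _ ≤ ∑ v ∈ Q.part m, b v := (le_div_iff₀ hp_pos).mp hαm

theorem sum_div_sum_part_le {P Q : DistrictingPlan V G p k ε} {m : Fin k} {S : Finset V}
    (hS : S.Nonempty) (hSm : S ⊆ P.part m) (hQm : Q.part m = P.part m \ S) (hε : ε < 1)
    {b : V → ℝ} (hbp : ∀ v, b v ≤ p v) (hb : ∀ v, 0 < b v) {α : ℝ} (hα : 0 < α) (n : Fin k)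
    (hαn : α ≤ (∑ v ∈ Q.part n, b v) / ∑ v ∈ Q.part n, p v) :
    (∑ v ∈ S, b v) / ∑ v ∈ Q.part n, b v ≤ 2 * ε / (α * (1 - ε)) := by
  have hbS : 0 < ∑ v ∈ S, b v := sum_pos (fun v _ ↦ hb v) hS
  have hpS : ∑ v ∈ S, p v ≤ 2 * ε * ((∑ v, p v) / k) := by
    have := P.sum_part_sub_sum_part_le Q m m
    rwa [hQm, ← sum_sdiff hSm, add_sub_cancel_left] at this
  have hpV : 0 < ∑ v, p v := by
    have : Nonempty V := ⟨hS.choose⟩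
    exact (sum_pos (fun v _ ↦ hb v) univ_nonempty).trans_le (sum_le_sum fun v _ ↦ hbp v)
  have hk : (0 : ℝ) < k := Nat.cast_pos.mpr m.pos
  refine div_le_two_mul_div_mul_one_sub hbS ((sum_le_sum fun v _ ↦ hbp v).trans hpS) ?_
    (by positivity) hα hε
  simpa only [mul_div_assoc] using Q.mul_le_sum_part n hbp hb hα.le hαn

end DistrictingPlan

theorem district_share_stability_general
    {V : Type*} [Fintype V] [DecidableEq V] (G : SimpleGraph V)
    (p : V → ℝ) (k : ℕ) (ε : ℝ) (hε0 : 0 ≤ ε) (hε1 : ε < 1)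
    (P P' : DistrictingPlan V G p k ε)
    -- the one-way perturbation moving `Vij` from district `i` to district `j`
    (i j : Fin k) (hij : i ≠ j) (Vij : Finset V) (hVne : Vij.Nonempty)
    (hVsub : Vij ⊆ P.part i)
    (hPi' : P'.part i = P.part i \ Vij)
    (hPj' : P'.part j = P.part j ∪ Vij)
    (hother : ∀ m, m ≠ i → m ≠ j → P'.part m = P.part m)
    -- the data `a`, `b` and the ratio function `f = a/b`
    (a b : V → ℝ) (hbp : ∀ v, b v ≤ p v)
    (hb : ∀ v, 0 < b v)
    (f : Finset V → ℝ)
    (hf : ∀ W : Finset V, f W = (∑ v ∈ W, a v) / (∑ v ∈ W, b v))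
    -- `α` is a lower bound on `b(W)/p(W)` over the four affected districts
    (α : ℝ) (hα : 0 < α)
    (hαPi' : α ≤ (∑ v ∈ P'.part i, b v) / (∑ v ∈ P'.part i, p v))
    (hαPj' : α ≤ (∑ v ∈ P'.part j, b v) / (∑ v ∈ P'.part j, p v)) :
    (∀ m : Fin k, |f (P.part m) - f (P'.part m)|
        ≤ (2 * ε / (α * (1 - ε))) *
            max |f Vij - f (P.part i)| |f Vij - f (P.part j)|) ∧
    |f (P.part i) - f (P'.part i)|
        ≤ (2 * ε / (α * (1 - ε))) * |f Vij - f (P.part i)| ∧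
    |f (P.part j) - f (P'.part j)|
        ≤ (2 * ε / (α * (1 - ε))) * |f Vij - f (P.part j)| := by
  obtain rfl : f = sumRatio a b := funext hf
  have hbpos (W : Finset V) (hW : W.Nonempty) : 0 < ∑ v ∈ W, b v := sum_pos (fun v _ ↦ hb v) hW
  have hcoeff := DistrictingPlan.sum_div_sum_part_le hVne hVsub hPi' hε1 hbp hb hα
  have hK : 0 ≤ 2 * ε / (α * (1 - ε)) :=
    div_nonneg (by positivity) (mul_pos hα (sub_pos.2 hε1)).le
  have hi : |sumRatio a b (P.part i) - sumRatio a b (P'.part i)|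
      ≤ 2 * ε / (α * (1 - ε)) * |sumRatio a b Vij - sumRatio a b (P.part i)| := by
    have hPi : P.part i = P'.part i ∪ Vij := by rw [hPi', sdiff_union_of_subset hVsub]
    rw [hPi]
    exact abs_sumRatio_union_sub_le' (hPi' ▸ sdiff_disjoint) (hbpos _ (P'.part_nonempty i))
      (hbpos _ hVne) (hcoeff i hαPi')
  have hj : |sumRatio a b (P.part j) - sumRatio a b (P'.part j)|
      ≤ 2 * ε / (α * (1 - ε)) * |sumRatio a b Vij - sumRatio a b (P.part j)| := by
    have hcoeff_j := hcoeff j hαPj'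
    rw [hPj'] at hcoeff_j
    rw [abs_sub_comm, hPj']
    exact abs_sumRatio_union_sub_le ((P.part_disjoint j i hij.symm).mono_right hVsub)
      (hbpos _ (P.part_nonempty j)) (hbpos _ hVne) hcoeff_j
  refine ⟨fun m ↦ ?_, hi, hj⟩
  by_cases hmi : m = i
  · subst hmi
    exact hi.trans (mul_le_mul_of_nonneg_left (le_max_left _ _) hK)
  by_cases hmj : m = j
  · subst hmj
    exact hj.trans (mul_le_mul_of_nonneg_left (le_max_right _ _) hK)
  rw [hother m hmi hmj, sub_self, abs_zero]
  exact mul_nonneg hK ((abs_nonneg _).trans (le_max_left _ _))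

/-- **District vote-share stability under a one-way perturbation**: if `P'` is
a one-way perturbation of `P` moving `Vij` from district `i` to district `j`,
then the change in the ratio function `f = a/b` on every district is bounded by
`(2ε/(α(1-ε))) · max(|f(Vij) - f(P_i)|, |f(Vij) - f(P_j)|)`; in particular the
changes on districts `i` and `j` are bounded by `(2ε/(α(1-ε)))·|f(Vij) - f(P_i)|`
and `(2ε/(α(1-ε)))·|f(Vij) - f(P_j)|` respectively. -/
theorem district_share_stability
    {V : Type*} [Fintype V] [DecidableEq V] (G : SimpleGraph V)
    (p : V → ℝ) (k : ℕ) (ε : ℝ) (hk : 2 ≤ k) (hε0 : 0 ≤ ε) (hε1 : ε < 1)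
    (hG : G.Connected) (hp : ∀ v, 0 ≤ p v)
    (P P' : DistrictingPlan V G p k ε)
    -- the one-way perturbation moving `Vij` from district `i` to district `j`
    (i j : Fin k) (hij : i ≠ j) (Vij : Finset V) (hVne : Vij.Nonempty)
    (hVsub : Vij ⊆ P.part i)
    (hPi' : P'.part i = P.part i \ Vij)
    (hPj' : P'.part j = P.part j ∪ Vij)
    (hother : ∀ m, m ≠ i → m ≠ j → P'.part m = P.part m)
    -- the data `a`, `b` and the ratio function `f = a/b`
    (a b : V → ℝ) (ha : ∀ v, 0 ≤ a v) (hab : ∀ v, a v ≤ b v) (hbp : ∀ v, b v ≤ p v)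
    (hb : ∀ v, 0 < b v)
    (f : Finset V → ℝ)
    (hf : ∀ W : Finset V, f W = (∑ v ∈ W, a v) / (∑ v ∈ W, b v))
    -- `α` is a lower bound on `b(W)/p(W)` over the four affected districts
    (α : ℝ) (hα : 0 < α)
    (hαPi : α ≤ (∑ v ∈ P.part i, b v) / (∑ v ∈ P.part i, p v))
    (hαPi' : α ≤ (∑ v ∈ P'.part i, b v) / (∑ v ∈ P'.part i, p v))
    (hαPj : α ≤ (∑ v ∈ P.part j, b v) / (∑ v ∈ P.part j, p v))
    (hαPj' : α ≤ (∑ v ∈ P'.part j, b v) / (∑ v ∈ P'.part j, p v)) :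
    (∀ m : Fin k, |f (P.part m) - f (P'.part m)|
        ≤ (2 * ε / (α * (1 - ε))) *
            max |f Vij - f (P.part i)| |f Vij - f (P.part j)|) ∧
    |f (P.part i) - f (P'.part i)|
        ≤ (2 * ε / (α * (1 - ε))) * |f Vij - f (P.part i)| ∧
    |f (P.part j) - f (P'.part j)|
        ≤ (2 * ε / (α * (1 - ε))) * |f Vij - f (P.part j)| :=
  district_share_stability_general G p k ε hε0 hε1 P P' i j hij Vij hVne hVsub hPi' hPj' hother a b
    hbp hb f hf α hα hαPi' hαPj'

end
end

section
/- Let G be a finite simple graph on vertices {w_1,…,w_k} with an injective vertex function F ordered so that F(w_1) < … < F(w_k), and let (b_i, d_i) be the persistence-diagram point contributed by w_i. Suppose there exists a walk in G from w_i to some vertex w with F(w) < F(w_i). Then d_i is finite and d_i = min over all walks γ in G from w_i to a vertex of strictly smaller F-value of ( max over vertices v on γ of F(v) ). In other words, the death value of w_i is the minimax F-value over paths connecting w_i to a vertex less than it, so any path from w_i to a vertex of smaller F-value must pass through a vertex with F-value at least d_i, and some such path achieves maximum exactly d_i. -/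
open scoped Classical

noncomputable section

/-- A point of a degree-0 persistence diagram: a real birth value and a death
value in `EReal` (which may be `⊤`). -/
abbrev PDPoint : Type := ℝ × EReal

/-- The distance between two death values, with `|⊤ - ⊤| = 0` and the distance
from a finite value to `⊤` equal to `⊤`. -/
noncomputable def deathDist (x y : EReal) : EReal :=
  if x = ⊤ ∧ y = ⊤ then 0
  else if x = ⊤ ∨ y = ⊤ then ⊤
  else ((|x.toReal - y.toReal| : ℝ) : EReal)

/-- The ℓ∞ distance between two persistence diagram points. -/
noncomputable def pointDistInf (p q : PDPoint) : EReal :=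
  max ((|p.1 - q.1| : ℝ) : EReal) (deathDist p.2 q.2)

/-- The ℓ∞ distance `(d - b)/2` from a diagram point to the diagonal
(`⊤` for a point with infinite death). -/
noncomputable def diagDistInf (p : PDPoint) : EReal :=
  if p.2 = ⊤ then ⊤ else (((p.2.toReal - p.1) / 2 : ℝ) : EReal)

/-- `M : ι → Option κ` encodes a partial bijection when it is injective on
matched values. -/
def IsPartialMatching {ι κ : Type*} (M : ι → Option κ) : Prop :=
  ∀ i₁ i₂ j, M i₁ = some j → M i₂ = some j → i₁ = i₂

/-- The ∞-cost of a partial matching between two persistence diagrams: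
the supremum of ℓ∞ distances between matched points together with the
diagonal distances of all unmatched points of either diagram. -/
noncomputable def matchingCost {ι κ : Type*} (D₁ : ι → PDPoint) (D₂ : κ → PDPoint)
    (M : ι → Option κ) : EReal :=
  (⨆ i : ι, (M i).elim (diagDistInf (D₁ i)) (fun j => pointDistInf (D₁ i) (D₂ j))) ⊔
  (⨆ j ∈ {j : κ | ∀ i, M i ≠ some j}, diagDistInf (D₂ j))

/-- The bottleneck distance between two persistence diagrams: the infimum of
the ∞-cost over all partial bijections. -/
noncomputable def bottleneckDist {ι κ : Type*} (D₁ : ι → PDPoint) (D₂ : κ → PDPoint) : EReal :=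
  ⨅ M ∈ {M : ι → Option κ | IsPartialMatching M}, matchingCost D₁ D₂ M

/-- `u` and `v` are connected within the sublevel set `{w | F w ≤ t}` of `G`. -/
def sublevelReach {V : Type*} (G : SimpleGraph V) (F : V → ℝ) (t : ℝ) (u v : V) : Prop :=
  ∃ (hu : F u ≤ t) (hv : F v ≤ t),
    (G.induce {w | F w ≤ t}).Reachable ⟨u, hu⟩ ⟨v, hv⟩

/-- The death value of the degree-0 persistence class created by vertex `v` of
the sublevel-set filtration of `G` by `F`: the least threshold `t` at which the
connected component of `v` in the sublevel graph contains a vertex of strictly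
smaller `F`-value (`⊤` if this never happens). -/
noncomputable def deathValue {V : Type*} (G : SimpleGraph V) (F : V → ℝ) (v : V) : EReal :=
  sInf {t : EReal | ∃ s : ℝ, t = (s : EReal) ∧ ∃ u, F u < F v ∧ sublevelReach G F s v u}

/-- The degree-0 persistence diagram of the sublevel-set filtration of `G` by
`F`, as an indexed family of points: vertex `v` contributes the point
`(F v, deathValue G F v)`. -/
noncomputable def persistenceDiagram {V : Type*} (G : SimpleGraph V) (F : V → ℝ) :
    V → PDPoint :=
  fun v => (F v, deathValue G F v)

/-!
A walk from `v` down to a smaller vertex lies in the sublevel set of its own maximum, so that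
maximum is a death threshold, and every threshold bounds the maximum of some such walk from
above. The maxima of walks take values in the finite set `range F`, hence the least threshold
exists, is the death value, and is attained by a walk.
-/

theorem SimpleGraph.Walk.exists_mem_support_forall_le {V α : Type*} [LinearOrder α]
    {G : SimpleGraph V} {u v : V} (f : V → α) (W : G.Walk u v) :
    ∃ x ∈ W.support, ∀ y ∈ W.support, f y ≤ f x := by
  simpa using Multiset.exists_max_image f (s := (W.support : Multiset V)) (by simp)

theorem SimpleGraph.induce_reachable_iff_exists_walk {V : Type*} (G : SimpleGraph V)
    {s : Set V} {u w : V} (hu : u ∈ s) (hw : w ∈ s) :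
    (G.induce s).Reachable ⟨u, hu⟩ ⟨w, hw⟩ ↔ ∃ W : G.Walk u w, ∀ x ∈ W.support, x ∈ s := by
  refine ⟨fun ⟨W⟩ => ⟨W.map (Embedding.induce s).toHom, fun x hx => ?_⟩,
    fun ⟨W, hW⟩ => ⟨W.induce s hW⟩⟩
  change x ∈ (W.map (Embedding.induce s).toHom).support at hx
  rw [Walk.support_map, List.mem_map] at hx
  obtain ⟨y, -, rfl⟩ := hx
  exact y.2

section Sublevel

variable {V : Type*} (G : SimpleGraph V) (F : V → ℝ)

theorem sublevelReach_iff_exists_walk (t : ℝ) (u w : V) :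
    sublevelReach G F t u w ↔ ∃ W : G.Walk u w, ∀ x ∈ W.support, F x ≤ t := by
  refine ⟨fun ⟨hu, hw, h⟩ => (G.induce_reachable_iff_exists_walk hu hw).mp h, ?_⟩
  rintro ⟨W, hW⟩
  have hu := hW u W.start_mem_support
  have hw := hW w W.end_mem_support
  exact ⟨hu, hw, (G.induce_reachable_iff_exists_walk hu hw).mpr ⟨W, hW⟩⟩

def deathThresholds (v : V) : Set ℝ :=
  {s | ∃ u, F u < F v ∧ sublevelReach G F s v u}

variable {G F}

theorem deathValue_eq_of_isLeast {v : V} {d : ℝ} (h : IsLeast (deathThresholds G F v) d) :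
    deathValue G F v = d := by
  refine le_antisymm (sInf_le ⟨d, rfl, h.1⟩) (le_sInf ?_)
  rintro t ⟨s, rfl, hs⟩
  exact EReal.coe_le_coe_iff.mpr (h.2 hs)

theorem exists_max_support_mem_deathThresholds {v u : V} (hu : F u < F v) (W : G.Walk v u) :
    ∃ x ∈ W.support, F x ∈ deathThresholds G F v ∧ ∀ y ∈ W.support, F y ≤ F x := by
  obtain ⟨x, hx, hmax⟩ := W.exists_mem_support_forall_le F
  exact ⟨x, hx, ⟨u, hu, (sublevelReach_iff_exists_walk G F _ v u).mpr ⟨W, hmax⟩⟩, hmax⟩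

theorem exists_isLeast_deathThresholds [Finite V] {v : V}
    (hreach : ∃ u, F u < F v ∧ G.Reachable v u) :
    ∃ x, IsLeast (deathThresholds G F v) (F x) := by
  have hne : {x | F x ∈ deathThresholds G F v}.Nonempty := by
    obtain ⟨u, hu, ⟨W⟩⟩ := hreach
    obtain ⟨x, -, hx, -⟩ := exists_max_support_mem_deathThresholds hu W
    exact ⟨x, hx⟩
  obtain ⟨x, hx, hmin⟩ := Set.exists_min_image _ F (Set.toFinite _) hne
  refine ⟨x, hx, ?_⟩
  rintro s ⟨u, hu, hvu⟩
  obtain ⟨W, hW⟩ := (sublevelReach_iff_exists_walk G F s v u).mp hvu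
  obtain ⟨y, hy, hyT, -⟩ := exists_max_support_mem_deathThresholds hu W
  exact (hmin y hyT).trans (hW y hy)

end Sublevel

theorem death_value_minimax_general
    {V : Type*} [Fintype V] (G : SimpleGraph V) (F : V → ℝ)
    (v : V)
    (hreach : ∃ u, F u < F v ∧ G.Reachable v u) :
    deathValue G F v ≠ ⊤ ∧
    (∀ u, F u < F v → ∀ W : G.Walk v u,
      ∃ x ∈ W.support, deathValue G F v ≤ (F x : EReal)) ∧
    (∃ u, F u < F v ∧ ∃ W : G.Walk v u,
      ∀ x ∈ W.support, (F x : EReal) ≤ deathValue G F v) := by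
  obtain ⟨d, hd⟩ := exists_isLeast_deathThresholds hreach
  rw [deathValue_eq_of_isLeast hd]
  refine ⟨EReal.coe_ne_top _, fun u hu W => ?_, ?_⟩
  · obtain ⟨x, hx, hxT, -⟩ := exists_max_support_mem_deathThresholds hu W
    exact ⟨x, hx, EReal.coe_le_coe_iff.mpr (hd.2 hxT)⟩
  · obtain ⟨u, hu, hvu⟩ := hd.1
    obtain ⟨W, hW⟩ := (sublevelReach_iff_exists_walk G F _ v u).mp hvu
    exact ⟨u, hu, W, fun x hx => EReal.coe_le_coe_iff.mpr (hW x hx)⟩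

/-- **Minimax characterization of death values**: if some walk joins `v` to a
vertex of strictly smaller `F`-value, then the death value of `v` is finite,
every walk from `v` to a vertex of smaller `F`-value passes through a vertex
with `F`-value at least the death value, and some such walk stays entirely at
or below the death value (so the death value is the minimum over such walks of
the maximum of `F` over the walk). -/
theorem death_value_minimax
    {V : Type*} [Fintype V] (G : SimpleGraph V) (F : V → ℝ)
    (hF : Function.Injective F) (v : V)
    (hreach : ∃ u, F u < F v ∧ G.Reachable v u) :
    deathValue G F v ≠ ⊤ ∧
    (∀ u, F u < F v → ∀ W : G.Walk v u,
      ∃ x ∈ W.support, deathValue G F v ≤ (F x : EReal)) ∧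
    (∃ u, F u < F v ∧ ∃ W : G.Walk v u,
      ∀ x ∈ W.support, (F x : EReal) ≤ deathValue G F v) :=
  death_value_minimax_general G F v hreach

end
end
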